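/- Let ℓ₂ be the complex Hilbert space of square-summable complex sequences, let g₀ ∈ ℓ₂ with ‖g₀‖ = 1, and let ε ∈ (0,1). Suppose there exists a bounded linear operator T on ℓ₂ satisfying (P3): for every non-zero x ∈ ℓ₂ the distance of the orbit Orb(x,T) to g₀ is less than ε, i.e. inf_{n∈ℕ} ‖T^n x − g₀‖ < ε. Then there exists a bounded linear operator T' on ℓ₂ which has no non-trivial invariant closed subspace, i.e. every non-zero vector of ℓ₂ is cyclic for T'. -/

import Mathlib

/-- The complex Hilbert space `ℓ₂` of square-summable complex sequences. -/
abbrev ellTwo : Type := lp (fun _ : ℕ => ℂ) 2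

/-!
By Zorn's lemma there is a minimal non-zero closed `T`-invariant subspace `M`. Indeed, by (P3)
every member of a chain of such subspaces contains a point within `ε` of `g₀`; by uniform
convexity of the Hilbert norm, near-best approximations of `g₀` from members of the chain that
nearly maximise the distance to `g₀` form a Cauchy sequence, whose limit lies in the intersection
at distance `≤ ε < ‖g₀‖` from `g₀` and so is non-zero. By minimality every non-zero vector of `M`
is cyclic for `T|M`. A rescaled eigenvector would violate (P3), so `M` is infinite-dimensional;
orthonormal families in `ℓ₂` are countable, so `M` is isometric to `ℓ₂`, and conjugating `T|M`
by this isometry gives the required operator.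
-/

open Metric Set Filter Topology Submodule
open scoped lp InnerProductSpace

lemma Metric.exists_mem_dist_sq_lt {α : Type*} [PseudoMetricSpace α] {s : Set α}
    (hs : s.Nonempty) {x : α} {a : ℝ} (h : infDist x s ^ 2 < a) : ∃ y ∈ s, dist x y ^ 2 < a := by
  have ha : infDist x s < √a := (Real.lt_sqrt infDist_nonneg).2 h
  obtain ⟨y, hy, hxy⟩ := (infDist_lt_iff hs).1 ha
  exact ⟨y, hy, (Real.lt_sqrt dist_nonneg).1 hxy⟩

section ConvexChain

variable {E : Type*} [NormedAddCommGroup E] [InnerProductSpace ℝ E]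

/-- Uniform convexity of the norm, via Apollonius's theorem at the midpoint of `y` and `z`. -/
lemma Convex.dist_sq_le_of_infDist_sq_ge {K : Set E} (hK : Convex ℝ K) {g y z : E}
    (hy : y ∈ K) (hz : z ∈ K) {D u : ℝ} (hgy : dist g y ^ 2 ≤ D + u)
    (hgz : dist g z ^ 2 ≤ D + u) (hD : D - u ≤ infDist g K ^ 2) : dist y z ^ 2 ≤ 8 * u := by
  have hmid : infDist g K ^ 2 ≤ dist g (midpoint ℝ y z) ^ 2 :=
    pow_le_pow_left₀ infDist_nonneg (infDist_le_dist_of_mem (hK.midpoint_mem hy hz)) 2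
  have := EuclideanGeometry.dist_sq_add_dist_sq_eq_two_mul_dist_midpoint_sq_add_half_dist_sq g y z
  nlinarith

lemma IsChain.dist_sq_le_of_infDist_sq_ge {c : Set (Set E)} (hc : IsChain (· ⊆ ·) c)
    (hconv : ∀ K ∈ c, Convex ℝ K) {g y z : E} {K L : Set E} (hK : K ∈ c) (hL : L ∈ c)
    (hy : y ∈ K) (hz : z ∈ L) {D u : ℝ} (hgy : dist g y ^ 2 ≤ D + u)
    (hgz : dist g z ^ 2 ≤ D + u) (hDK : D - u ≤ infDist g K ^ 2)
    (hDL : D - u ≤ infDist g L ^ 2) : dist y z ^ 2 ≤ 8 * u := by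
  rcases hc.total hK hL with hKL | hLK
  · exact (hconv L hL).dist_sq_le_of_infDist_sq_ge (hKL hy) hz hgy hgz hDL
  · exact (hconv K hK).dist_sq_le_of_infDist_sq_ge hy (hLK hz) hgy hgz hDK

lemma IsChain.infDist_le_sqrt_of_infDist_sq_ge {c : Set (Set E)} (hc : IsChain (· ⊆ ·) c)
    (hconv : ∀ K ∈ c, Convex ℝ K) {g y : E} {K L : Set E} (hK : K ∈ c) (hL : L ∈ c)
    (hL_ne : L.Nonempty) (hy : y ∈ K) {D u : ℝ} (hu : 0 < u) (hgy : dist g y ^ 2 ≤ D + u)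
    (hDK : D - u ≤ infDist g K ^ 2) (hLD : infDist g L ^ 2 ≤ D) : infDist y L ≤ √(8 * u) := by
  rcases hc.total hK hL with hKL | hLK
  · rw [infDist_zero_of_mem (hKL hy)]
    positivity
  · obtain ⟨z, hzL, hz⟩ := exists_mem_dist_sq_lt hL_ne (hLD.trans_lt (lt_add_of_pos_right D hu))
    have hDL : D - u ≤ infDist g L ^ 2 :=
      hDK.trans (pow_le_pow_left₀ infDist_nonneg (infDist_le_infDist_of_subset hLK hL_ne) 2)
    exact (infDist_le_dist_of_mem hzL).trans (Real.le_sqrt_of_sq_le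
      (hc.dist_sq_le_of_infDist_sq_ge hconv hK hL hy hzL hgy hz.le hDK hDL))

theorem IsChain.exists_mem_sInter_dist_sq_le_of_isLUB [CompleteSpace E] {c : Set (Set E)}
    (hc : IsChain (· ⊆ ·) c) (hclosed : ∀ K ∈ c, IsClosed K) (hconv : ∀ K ∈ c, Convex ℝ K)
    (hc_ne : ∀ K ∈ c, K.Nonempty) {g : E} {D : ℝ}
    (hD : IsLUB ((fun K => infDist g K ^ 2) '' c) D) : ∃ m ∈ ⋂₀ c, dist g m ^ 2 ≤ D := by
  set u : ℕ → ℝ := fun k => 1 / (k + 1)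
  have hu₀ : Tendsto u atTop (𝓝 0) := tendsto_one_div_add_atTop_nhds_zero_nat
  have hu : Tendsto (fun k => √(8 * u k)) atTop (𝓝 0) := by
    simpa using (hu₀.const_mul 8).sqrt
  have hu_pos : ∀ k, 0 < u k := fun k => Nat.one_div_pos_of_nat
  have hu_anti : Antitone u := fun j k hjk => Nat.one_div_le_one_div hjk
  have hdeep : ∀ k, ∃ K ∈ c, D - u k < infDist g K ^ 2 := fun k => by
    obtain ⟨_, ⟨K, hK, rfl⟩, h, -⟩ := hD.exists_between (sub_lt_self D (hu_pos k))
    exact ⟨K, hK, h⟩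
  choose K hKc hKD using hdeep
  have hnear : ∀ k, ∃ y ∈ K k, dist g y ^ 2 < D + u k := fun k =>
    exists_mem_dist_sq_lt (hc_ne _ (hKc k))
      ((hD.1 (mem_image_of_mem _ (hKc k))).trans_lt (lt_add_of_pos_right D (hu_pos k)))
  choose y hyK hyD using hnear
  have hcauchy : CauchySeq y := by
    refine cauchySeq_of_le_tendsto_0 (fun N => √(8 * u N)) (fun n m N hn hm => ?_) hu
    refine Real.le_sqrt_of_sq_le (hc.dist_sq_le_of_infDist_sq_ge hconv (hKc n) (hKc m) (hyK n)
      (hyK m) (g := g) (D := D) ?_ ?_ ?_ ?_)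
    · linarith [hyD n, hu_anti hn]
    · linarith [hyD m, hu_anti hm]
    · linarith [hKD n, hu_anti hn]
    · linarith [hKD m, hu_anti hm]
  obtain ⟨m, hm⟩ := cauchySeq_tendsto_of_complete hcauchy
  refine ⟨m, fun L hL => ?_, ?_⟩
  · have hclose : ∀ k, infDist (y k) L ≤ √(8 * u k) := fun k =>
      hc.infDist_le_sqrt_of_infDist_sq_ge hconv (hKc k) hL (hc_ne L hL) (hyK k) (hu_pos k)
        (hyD k).le (hKD k).le (hD.1 (mem_image_of_mem _ hL))
    have hlim : Tendsto (fun k => infDist (y k) L) atTop (𝓝 (infDist m L)) :=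
      ((continuous_infDist_pt L).tendsto m).comp hm
    rw [(hclosed L hL).mem_iff_infDist_zero (hc_ne L hL)]
    exact le_antisymm (le_of_tendsto_of_tendsto' hlim hu hclose) infDist_nonneg
  · have hlim : Tendsto (fun k => dist g (y k) ^ 2) atTop (𝓝 (dist g m ^ 2)) :=
      (tendsto_const_nhds.dist hm).pow 2
    have hu' : Tendsto (fun k => D + u k) atTop (𝓝 D) := by
      simpa using tendsto_const_nhds.add hu₀
    exact le_of_tendsto_of_tendsto' hlim hu' fun k => (hyD k).le

theorem IsChain.exists_mem_sInter_dist_le [CompleteSpace E] {c : Set (Set E)}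
    (hc : IsChain (· ⊆ ·) c) (hne : c.Nonempty) (hclosed : ∀ K ∈ c, IsClosed K)
    (hconv : ∀ K ∈ c, Convex ℝ K) {g : E} {r : ℝ} (hr : ∀ K ∈ c, ∃ y ∈ K, dist g y ≤ r) :
    ∃ m ∈ ⋂₀ c, dist g m ≤ r := by
  have hr₀ : 0 ≤ r := by
    obtain ⟨y, -, hy⟩ := hr _ hne.some_mem
    exact dist_nonneg.trans hy
  have hbound : ∀ K ∈ c, infDist g K ^ 2 ≤ r ^ 2 := fun K hK => by
    obtain ⟨y, hy, hgy⟩ := hr K hK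
    exact pow_le_pow_left₀ infDist_nonneg ((infDist_le_dist_of_mem hy).trans hgy) 2
  have hLUB := isLUB_csSup (hne.image fun K => infDist g K ^ 2) ⟨r ^ 2, forall_mem_image.2 hbound⟩
  obtain ⟨m, hm, hgm⟩ := hc.exists_mem_sInter_dist_sq_le_of_isLUB hclosed hconv
    (fun K hK => (hr K hK).imp fun _ hy => hy.1) hLUB
  refine ⟨m, hm, (pow_le_pow_iff_left₀ dist_nonneg hr₀ two_ne_zero).1 ?_⟩
  exact hgm.trans (csSup_le (hne.image _) (forall_mem_image.2 hbound))

end ConvexChain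

section CyclicVectors

variable {𝕜 E : Type*} [NormedField 𝕜] [AddCommGroup E] [Module 𝕜 E] [TopologicalSpace E]

def IsCyclicVector (T : E →L[𝕜] E) (x : E) : Prop :=
  Dense (span 𝕜 (range fun n : ℕ => (T ^ n) x) : Set E)

structure IsNonzeroClosedInvariant (T : E →L[𝕜] E) (K : Submodule 𝕜 E) : Prop where
  ne_bot : K ≠ ⊥
  isClosed : IsClosed (K : Set E)
  mapsTo : MapsTo T K K

lemma IsNonzeroClosedInvariant.pow_apply_mem {T : E →L[𝕜] E} {K : Submodule 𝕜 E}
    (hK : IsNonzeroClosedInvariant T K) (n : ℕ) {x : E} (hx : x ∈ K) : (T ^ n) x ∈ K := by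
  rw [pow_apply_eq_iterate]
  exact hK.mapsTo.iterate n hx

lemma ContinuousLinearMap.coe_pow_restrict_apply (T : E →L[𝕜] E) {K : Submodule 𝕜 E}
    (hK : ∀ x ∈ K, T x ∈ K) (n : ℕ) (x : K) : (((T.restrict hK) ^ n) x : E) = (T ^ n) x := by
  induction n with
  | zero => rfl
  | succ n ih =>
    rw [pow_succ', mul_apply_eq_comp, coe_restrict_apply, ih, pow_succ', mul_apply_eq_comp]

variable [IsTopologicalAddGroup E] [ContinuousSMul 𝕜 E]

lemma IsCyclicVector.conj {F : Type*} [AddCommGroup F] [Module 𝕜 F] [TopologicalSpace F]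
    [IsTopologicalAddGroup F] [ContinuousConstSMul 𝕜 F] {S : E →L[𝕜] E} {x : E}
    (hx : IsCyclicVector S x) (e : E ≃L[𝕜] F) :
    IsCyclicVector (e.conjContinuousAlgEquiv S) (e x) := by
  have horbit : (range fun n : ℕ => (e.conjContinuousAlgEquiv S ^ n) (e x)) =
      e '' range fun n : ℕ => (S ^ n) x := by
    rw [← range_comp]
    congr 1
    funext n
    rw [← map_pow, ContinuousLinearEquiv.conjContinuousAlgEquiv_apply_apply,
      ContinuousLinearEquiv.symm_apply_apply, Function.comp_apply]
  rw [IsCyclicVector, horbit, ← e.coe_toLinearEquiv, span_image_linearEquiv, map_coe]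
  exact e.surjective.denseRange.dense_image e.continuous hx

lemma isNonzeroClosedInvariant_topologicalClosure_span_orbit (T : E →L[𝕜] E) {x : E}
    (hx : x ≠ 0) :
    IsNonzeroClosedInvariant T (span 𝕜 (range fun n : ℕ => (T ^ n) x)).topologicalClosure where
  ne_bot := (Submodule.ne_bot_iff _).2
    ⟨x, le_topologicalClosure _ (subset_span ⟨0, by simp⟩), hx⟩
  isClosed := isClosed_topologicalClosure _
  mapsTo := by
    refine (Module.End.mem_invtSubmodule_iff_mapsTo _).1
      (topologicalClosure_mem_invtSubmodule ?_)
    rw [Module.End.mem_invtSubmodule_iff_map_le, map_span, span_le, ← range_comp]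
    rintro _ ⟨n, rfl⟩
    exact subset_span ⟨n + 1, by simp [pow_succ']⟩

theorem Minimal.isCyclicVector_restrict {T : E →L[𝕜] E} {M : Submodule 𝕜 E}
    (hM : Minimal (IsNonzeroClosedInvariant T) M) {y : M} (hy : y ≠ 0) :
    IsCyclicVector (T.restrict fun _ hx => hM.prop.mapsTo hx) y := by
  set S := T.restrict fun _ hx => hM.prop.mapsTo hx
  set N := (span 𝕜 (range fun n : ℕ => (T ^ n) (y : E))).topologicalClosure
  have hN := isNonzeroClosedInvariant_topologicalClosure_span_orbit T (x := y) (by simpa)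
  have hNM : N ≤ M := by
    refine topologicalClosure_minimal _ (span_le.2 ?_) hM.prop.isClosed
    rintro _ ⟨n, rfl⟩
    exact hM.prop.pow_apply_mem n y.2
  have hMN : M ≤ N := hM.2 hN hNM
  have horbit : Subtype.val '' (range fun n : ℕ => (S ^ n) y) = range fun n => (T ^ n) (y : E) := by
    rw [← range_comp]
    exact congrArg range (funext fun n => T.coe_pow_restrict_apply _ n y)
  intro z
  rw [closure_subtype, ← M.coe_subtype, ← map_coe, map_span, M.coe_subtype, horbit,
    ← topologicalClosure_coe]
  exact hMN z.2

end CyclicVectors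

section OrbitsMeetBall

variable {𝕜 E : Type*} [RCLike 𝕜] [NormedAddCommGroup E] [NormedSpace 𝕜 E]

/-- Property (P3) of the paper. -/
def OrbitsMeetBall (T : E →L[𝕜] E) (g : E) (ε : ℝ) : Prop :=
  ∀ x ≠ 0, ∃ n : ℕ, dist g ((T ^ n) x) < ε

variable {T : E →L[𝕜] E} {g : E} {ε : ℝ}

lemma OrbitsMeetBall.exists_mem_dist_lt (hT : OrbitsMeetBall T g ε) {K : Submodule 𝕜 E}
    (hK : IsNonzeroClosedInvariant T K) : ∃ y ∈ K, dist g y < ε := by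
  obtain ⟨x, hxK, hx⟩ := (Submodule.ne_bot_iff K).1 hK.ne_bot
  obtain ⟨n, hn⟩ := hT x hx
  exact ⟨_, hK.pow_apply_mem n hxK, hn⟩

/-- The orbit of an eigenvector rescaled to norm `r` has norms `‖μ‖ ^ n * r`: never above
`‖g‖ - ε` if `‖μ‖ ≤ 1` and `r = ‖g‖ - ε`, never below `‖g‖ + ε` if `‖μ‖ > 1` and `r = ‖g‖ + ε`. -/
lemma OrbitsMeetBall.not_hasEigenvector (hT : OrbitsMeetBall T g ε) (hε : ε < ‖g‖) {μ : 𝕜}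
    {v : E} (hv : Module.End.HasEigenvector (T : Module.End 𝕜 E) μ v) : False := by
  have hv₀ : 0 < ‖v‖ := norm_pos_iff.2 hv.2
  have hscaled : ∀ r : ℝ, 0 < r → ∃ n : ℕ, |‖μ‖ ^ n * r - ‖g‖| < ε := fun r hr => by
    set c : 𝕜 := ((r / ‖v‖ : ℝ) : 𝕜)
    have hc : ‖c‖ * ‖v‖ = r := by
      rw [RCLike.norm_ofReal, abs_of_pos (by positivity), div_mul_cancel₀ _ hv₀.ne']
    have hc₀ : c ≠ 0 := norm_pos_iff.1 (pos_of_mul_pos_left (hc ▸ hr) hv₀.le)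
    obtain ⟨n, hn⟩ := hT (c • v) (smul_ne_zero hc₀ hv.2)
    have hpow : (T ^ n) v = μ ^ n • v := by
      simpa only [← ContinuousLinearMap.toLinearMap_pow, ContinuousLinearMap.coe_coe]
        using hv.pow_apply n
    have hnorm : ‖(T ^ n) (c • v)‖ = ‖μ‖ ^ n * r := by
      rw [map_smul, hpow, norm_smul, norm_smul, norm_pow, mul_left_comm, hc]
    refine ⟨n, hnorm ▸ (abs_norm_sub_norm_le _ _).trans_lt ?_⟩
    rwa [← dist_eq_norm, dist_comm]
  have hε₀ : 0 < ε := by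
    obtain ⟨n, hn⟩ := hT v hv.2
    exact dist_nonneg.trans_lt hn
  rcases le_or_gt ‖μ‖ 1 with hμ | hμ
  · obtain ⟨n, hn⟩ := hscaled (‖g‖ - ε) (by linarith)
    have : ‖μ‖ ^ n * (‖g‖ - ε) ≤ ‖g‖ - ε :=
      mul_le_of_le_one_left (by linarith) (pow_le_one₀ (norm_nonneg μ) hμ)
    linarith [neg_abs_le (‖μ‖ ^ n * (‖g‖ - ε) - ‖g‖)]
  · obtain ⟨n, hn⟩ := hscaled (‖g‖ + ε) (by linarith [norm_nonneg g])
    have : ‖g‖ + ε ≤ ‖μ‖ ^ n * (‖g‖ + ε) :=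
      le_mul_of_one_le_left (by linarith [norm_nonneg g]) (one_le_pow₀ hμ.le)
    linarith [le_abs_self (‖μ‖ ^ n * (‖g‖ + ε) - ‖g‖)]

lemma OrbitsMeetBall.not_finiteDimensional [IsAlgClosed 𝕜] (hT : OrbitsMeetBall T g ε)
    (hε : ε < ‖g‖) {K : Submodule 𝕜 E} (hK : IsNonzeroClosedInvariant T K) :
    ¬ FiniteDimensional 𝕜 K := by
  intro hfin
  have : Nontrivial K := Submodule.nontrivial_iff_ne_bot.2 hK.ne_bot
  obtain ⟨μ, hμ⟩ :=
    Module.End.exists_eigenvalue ((T : Module.End 𝕜 E).restrict fun _ hx => hK.mapsTo hx)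
  obtain ⟨w, hw⟩ := hμ.exists_hasEigenvector
  refine hT.not_hasEigenvector hε (v := w) (μ := μ) ⟨?_, ?_⟩
  · exact Module.End.mem_eigenspace_iff.2 (congrArg Subtype.val hw.apply_eq_smul)
  · simpa using hw.2

end OrbitsMeetBall

section MinimalInvariantSubspace

variable {E : Type*} [NormedAddCommGroup E] [InnerProductSpace ℂ E] [CompleteSpace E]
  {T : E →L[ℂ] E} {g : E} {ε : ℝ}

lemma OrbitsMeetBall.isNonzeroClosedInvariant_sInf (hT : OrbitsMeetBall T g ε)
    (hε : ε < ‖g‖) {c : Set (Submodule ℂ E)} (hcK : ∀ K ∈ c, IsNonzeroClosedInvariant T K)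
    (hc : IsChain (· ≤ ·) c) (hne : c.Nonempty) : IsNonzeroClosedInvariant T (sInf c) := by
  let _ : InnerProductSpace ℝ E := InnerProductSpace.complexToReal
  have hsets : IsChain (· ⊆ ·) ((↑) '' c : Set (Set E)) :=
    hc.image_of_map_rel _ _ _ fun _ _ h => SetLike.coe_subset_coe.2 h
  obtain ⟨m, hm, hgm⟩ := hsets.exists_mem_sInter_dist_le (hne.image _)
    (forall_mem_image.2 fun K hK => (hcK K hK).isClosed)
    (forall_mem_image.2 fun K _ => (K.restrictScalars ℝ).convex)
    (forall_mem_image.2 fun K hK =>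
      (hT.exists_mem_dist_lt (hcK K hK)).imp fun _ h => ⟨h.1, h.2.le⟩)
  have hmc : m ∈ sInf c := Submodule.mem_sInf.2 fun K hK => hm _ (mem_image_of_mem _ hK)
  refine ⟨(Submodule.ne_bot_iff _).2 ⟨m, hmc, ?_⟩, ?_, ?_⟩
  · rintro rfl
    rw [dist_zero_right] at hgm
    linarith
  · rw [Submodule.coe_sInf]
    exact isClosed_biInter fun K hK => (hcK K hK).isClosed
  · intro x hx
    rw [SetLike.mem_coe, Submodule.mem_sInf] at hx ⊢
    exact fun K hK => (hcK K hK).mapsTo (hx K hK)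

lemma OrbitsMeetBall.exists_minimal [Nontrivial E] (hT : OrbitsMeetBall T g ε)
    (hε : ε < ‖g‖) : ∃ M, Minimal (IsNonzeroClosedInvariant T) M := by
  set S : Set (Submodule ℂ E)ᵒᵈ := {K | IsNonzeroClosedInvariant T (OrderDual.ofDual K)}
  have hchains : ∀ c ⊆ S, IsChain (· ≤ ·) c → ∃ ub ∈ S, ∀ K ∈ c, K ≤ ub := by
    intro c hcS hc
    rcases c.eq_empty_or_nonempty with rfl | hne
    · exact ⟨OrderDual.toDual ⊤, ⟨top_ne_bot, by simp, fun _ _ => trivial⟩, by simp⟩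
    · refine ⟨OrderDual.toDual (sInf (OrderDual.ofDual '' c)),
        hT.isNonzeroClosedInvariant_sInf hε (forall_mem_image.2 hcS)
          (hc.image_of_map_rel _ (· ≥ ·) _ fun _ _ h => h).symm (hne.image _),
        fun K hK => OrderDual.le_toDual.2 (sInf_le (mem_image_of_mem _ hK))⟩
  obtain ⟨M, hM⟩ := zorn_le₀ S hchains
  exact ⟨OrderDual.ofDual M, hM.of_dual⟩

end MinimalInvariantSubspace

section HilbertBasis

variable {𝕜 E F : Type*} [RCLike 𝕜] [NormedAddCommGroup E] [InnerProductSpace 𝕜 E]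
  [NormedAddCommGroup F] [InnerProductSpace 𝕜 F]

lemma Orthonormal.countable {ι κ : Type*} [Countable κ] (b : HilbertBasis κ 𝕜 E) {v : ι → E}
    (hv : Orthonormal 𝕜 v) : Countable ι := by
  have hcover : ∀ i, ∃ j, ⟪v i, b j⟫_𝕜 ≠ 0 := by
    intro i
    by_contra! h
    refine hv.ne_zero i (b.repr.map_eq_zero_iff.1 (lp.ext (funext fun j => ?_)))
    rw [b.repr_apply_apply, ← inner_conj_symm, h j, map_zero]
    rfl
  have hunion : (univ : Set ι) = ⋃ j, Function.support fun i => ‖⟪v i, b j⟫_𝕜‖ ^ 2 := by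
    ext i
    simpa using hcover i
  rw [← countable_univ_iff, hunion]
  exact countable_iUnion fun j => (hv.inner_products_summable (x := b j)).countable_support

lemma HilbertBasis.infinite_of_not_finiteDimensional {ι : Type*} (b : HilbertBasis ι 𝕜 E)
    (h : ¬ FiniteDimensional 𝕜 E) : Infinite ι := by
  by_contra hfin
  have : Fintype ι := @Fintype.ofFinite _ (not_infinite_iff_finite.1 hfin)
  exact h b.toOrthonormalBasis.toBasis.finiteDimensional_of_finite

lemma HilbertBasis.nonempty_linearIsometryEquiv_ell2_nat [CompleteSpace E] {ι : Type*}
    [Countable ι] [Infinite ι] (b : HilbertBasis ι 𝕜 E) : Nonempty (E ≃ₗᵢ[𝕜] ℓ²(ℕ, 𝕜)) := by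
  have : Denumerable ι := (nonempty_denumerable_iff.2 ⟨‹_›, ‹_›⟩).some
  set e : ℕ ≃ ι := (Denumerable.eqv ι).symm
  refine ⟨(HilbertBasis.mk (b.orthonormal.comp e e.injective) ?_).repr⟩
  rw [range_comp, e.surjective.range_eq, image_univ, b.dense_span]

theorem LinearIsometry.nonempty_linearIsometryEquiv_ell2_nat [CompleteSpace F] {κ : Type*}
    [Countable κ] (J : F →ₗᵢ[𝕜] E) (b : HilbertBasis κ 𝕜 E) (hF : ¬ FiniteDimensional 𝕜 F) :
    Nonempty (F ≃ₗᵢ[𝕜] ℓ²(ℕ, 𝕜)) := by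
  obtain ⟨w, c, -⟩ := exists_hilbertBasis 𝕜 F
  have : Countable w := (c.orthonormal.comp_linearIsometry J).countable b
  have : Infinite w := c.infinite_of_not_finiteDimensional hF
  exact c.nonempty_linearIsometryEquiv_ell2_nat

end HilbertBasis

theorem exists_operator_without_invariant_subspace_of_P3_general
    (g₀ : ellTwo) (hg₀ : ‖g₀‖ = 1) (ε : ℝ) (hε1 : ε < 1)
    (T : ellTwo →L[ℂ] ellTwo)
    -- (P3): the distance of the orbit of any non-zero vector to `g₀` is `< ε`:
    (hP3 : ∀ x : ellTwo, x ≠ 0 →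
      Metric.infDist g₀ (Set.range fun n : ℕ => (T ^ n) x) < ε) :
    ∃ T' : ellTwo →L[ℂ] ellTwo,
      ∀ x : ellTwo, x ≠ 0 →
        Dense ((Submodule.span ℂ (Set.range fun n : ℕ => (T' ^ n) x) :
          Submodule ℂ ellTwo) : Set ellTwo) := by
  have hT : OrbitsMeetBall T g₀ ε := fun x hx => by
    obtain ⟨_, ⟨n, rfl⟩, hn⟩ := (infDist_lt_iff (range_nonempty _)).1 (hP3 x hx)
    exact ⟨n, hn⟩
  have hε : ε < ‖g₀‖ := hg₀ ▸ hε1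
  have : Nontrivial ellTwo := nontrivial_of_ne g₀ 0 (norm_ne_zero_iff.1 (by simp [hg₀]))
  obtain ⟨M, hM⟩ := hT.exists_minimal hε
  have : CompleteSpace M := hM.prop.isClosed.completeSpace_coe
  obtain ⟨U⟩ := M.subtypeₗᵢ.nonempty_linearIsometryEquiv_ell2_nat
    (default : HilbertBasis ℕ ℂ ellTwo) (hT.not_finiteDimensional hε hM.prop)
  refine ⟨U.toContinuousLinearEquiv.conjContinuousAlgEquiv
    (T.restrict fun _ hx => hM.prop.mapsTo hx), fun x hx => ?_⟩
  have hcyc := (hM.isCyclicVector_restrict (y := U.symm x) (by simpa using hx)).conj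
    U.toContinuousLinearEquiv
  rwa [LinearIsometryEquiv.coe_toContinuousLinearEquiv, U.apply_symm_apply] at hcyc

/-- **Corollary 1.6 of the paper.** Let `g₀ ∈ ℓ₂` with `‖g₀‖ = 1` and
`ε ∈ (0,1)`.  If there is a bounded operator `T` on `ℓ₂` satisfying
(P3): for every non-zero `x` the distance of the orbit of `x` to `g₀` is `< ε`,
then there is a bounded operator `T'` on `ℓ₂` with no non-trivial invariant closed subspace,
i.e. every non-zero vector is cyclic for `T'`. -/
theorem exists_operator_without_invariant_subspace_of_P3
    (g₀ : ellTwo) (hg₀ : ‖g₀‖ = 1) (ε : ℝ) (hε0 : 0 < ε) (hε1 : ε < 1)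
    (T : ellTwo →L[ℂ] ellTwo)
    -- (P3): the distance of the orbit of any non-zero vector to `g₀` is `< ε`:
    (hP3 : ∀ x : ellTwo, x ≠ 0 →
      Metric.infDist g₀ (Set.range fun n : ℕ => (T ^ n) x) < ε) :
    ∃ T' : ellTwo →L[ℂ] ellTwo,
      ∀ x : ellTwo, x ≠ 0 →
        Dense ((Submodule.span ℂ (Set.range fun n : ℕ => (T' ^ n) x) :
          Submodule ℂ ellTwo) : Set ellTwo) :=
  exists_operator_without_invariant_subspace_of_P3_general g₀ hg₀ ε hε1 T hP3
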